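/- If a Boolean algebra B carries a strictly positive finitely additive probability measure μ, then B \ {0} = ⋃_{n<ω} {a : μ(a) ≥ 2^{-n}}, and each set {a : μ(a) ≥ ε} has intersection number at least ε. -/
import Mathlib


open scoped symmDiff

/-- The intersection number of a family `A` of elements of a Boolean algebra:
the supremum of `r ∈ [0,1]` such that every finite sequence from `A` (with repetitions)
has a subsequence of proportion at least `r` with nonzero meet. -/
noncomputable def interNum {α : Type*} [BooleanAlgebra α] (A : Set α) : ℝ :=
  sSup {r : ℝ | 0 ≤ r ∧ r ≤ 1 ∧ ∀ (m : ℕ) (f : Fin m → α), (∀ i, f i ∈ A) →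
    ∃ s : Finset (Fin m), r * (m : ℝ) ≤ (s.card : ℝ) ∧ (s.Nonempty → s.inf f ≠ ⊥)}

/-- A finitely additive (nonnegative, finite) measure on a Boolean algebra. -/
def IsFAMeasure {α : Type*} [BooleanAlgebra α] (μ : α → ℝ) : Prop :=
  μ ⊥ = 0 ∧ (∀ a, 0 ≤ μ a) ∧ ∀ a b : α, a ⊓ b = ⊥ → μ (a ⊔ b) = μ a + μ b

/-- A finitely additive probability measure on a Boolean algebra. -/
def IsFAProb {α : Type*} [BooleanAlgebra α] (μ : α → ℝ) : Prop :=
  IsFAMeasure μ ∧ μ ⊤ = 1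

/-- `μ` is strictly positive. -/
def StrictlyPositive {α : Type*} [BooleanAlgebra α] (μ : α → ℝ) : Prop :=
  ∀ a : α, a ≠ ⊥ → 0 < μ a

/-- `μ` is nonatomic: for every `ε > 0` there is a finite partition of `⊤`
into elements of measure `< ε`. -/
def Nonatomic {α : Type*} [BooleanAlgebra α] (μ : α → ℝ) : Prop :=
  ∀ ε : ℝ, 0 < ε → ∃ s : Finset α,
    (↑s : Set α).PairwiseDisjoint id ∧ s.sup id = ⊤ ∧ ∀ a ∈ s, μ a < ε

section KelleyAux

variable {α : Type*} [BooleanAlgebra α] {μ : α → ℝ}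

private lemma famea_sum (hμ : IsFAMeasure μ) {ι : Type*} (s : Finset ι) (h : ι → α)
    (hd : ∀ x ∈ s, ∀ y ∈ s, x ≠ y → Disjoint (h x) (h y)) :
    μ (s.sup h) = ∑ x ∈ s, μ (h x) := by
  classical
  induction s using Finset.cons_induction with
  | empty => simpa using hμ.1
  | cons a s ha ih =>
    rw [Finset.sup_cons, Finset.sum_cons,
      ← ih (fun x hx y hy => hd x (Finset.mem_cons_of_mem hx) y (Finset.mem_cons_of_mem hy))]
    refine hμ.2.2 _ _ ?_
    rw [← disjoint_iff, Finset.disjoint_sup_right]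
    intro i hi
    exact hd a (Finset.mem_cons_self a s) i (Finset.mem_cons_of_mem hi)
      (by rintro rfl; exact ha hi)

private def cell {m : ℕ} (f : Fin m → α) (g : Fin m → Bool) : α :=
  Finset.univ.inf fun i => if g i then f i else (f i)ᶜ

private lemma cell_le {m : ℕ} (f : Fin m → α) (g : Fin m → Bool) {i : Fin m}
    (hi : g i = true) : cell f g ≤ f i :=
  le_trans (Finset.inf_le (Finset.mem_univ i)) (le_of_eq (if_pos hi))

private lemma cell_le_compl {m : ℕ} (f : Fin m → α) (g : Fin m → Bool) {i : Fin m}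
    (hi : g i = false) : cell f g ≤ (f i)ᶜ :=
  le_trans (Finset.inf_le (Finset.mem_univ i)) (le_of_eq (if_neg (by simp [hi])))

private lemma cell_disjoint {m : ℕ} (f : Fin m → α) {g g' : Fin m → Bool}
    (hgg' : g ≠ g') : Disjoint (cell f g) (cell f g') := by
  obtain ⟨i, hi⟩ := Function.ne_iff.1 hgg'
  have key : ∀ (x y : Fin m → Bool), x i = true → y i = false →
      Disjoint (cell f x) (cell f y) := by
    intro x y hx hy
    exact disjoint_compl_right.mono (cell_le f x hx) (cell_le_compl f y hy)
  cases hb : g i <;> cases hb' : g' i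
  · exact absurd (hb.trans hb'.symm) hi
  · exact (key g' g hb' hb).symm
  · exact key g g' hb hb'
  · exact absurd (hb.trans hb'.symm) hi

private lemma sup_cell_aux {m : ℕ} (f : Fin m → α) (s : Finset (Fin m)) :
    (Finset.univ : Finset (Fin m → Bool)).sup
      (fun g => s.inf fun i => if g i then f i else (f i)ᶜ) = ⊤ := by
  classical
  induction s using Finset.induction_on with
  | empty => simp [Finset.sup_const Finset.univ_nonempty]
  | @insert a s ha ih =>
    apply top_unique
    rw [← ih]
    refine Finset.sup_le fun g _ => ?_
    have hcg : ∀ b : Bool,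
        (s.inf fun i => if Function.update g a b i then f i else (f i)ᶜ)
          = s.inf fun i => if g i then f i else (f i)ᶜ := by
      intro b
      refine Finset.inf_congr rfl fun i hi => ?_
      rw [Function.update_of_ne (fun h : i = a => ha (h ▸ hi))]
    have key : ∀ b : Bool, (if b then f a else (f a)ᶜ) ⊓
        (s.inf fun i => if g i then f i else (f i)ᶜ)
          ≤ (Finset.univ : Finset (Fin m → Bool)).sup (fun g' => (insert a s).inf fun i =>
              if g' i then f i else (f i)ᶜ) := by
      intro b
      refine le_trans (le_of_eq ?_)
        (Finset.le_sup (Finset.mem_univ (Function.update g a b)))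
      rw [Finset.inf_insert, Function.update_self, hcg b]
    calc s.inf (fun i => if g i then f i else (f i)ᶜ)
        = ((f a) ⊓ s.inf fun i => if g i then f i else (f i)ᶜ)
            ⊔ ((f a)ᶜ ⊓ s.inf fun i => if g i then f i else (f i)ᶜ) := by
          rw [← inf_sup_right, sup_compl_eq_top, top_inf_eq]
      _ ≤ _ := by
          refine sup_le ?_ ?_
          · simpa using key true
          · simpa using key false

private lemma sup_cell {m : ℕ} (f : Fin m → α) :
    (Finset.univ : Finset (Fin m → Bool)).sup (cell f) = ⊤ :=
  sup_cell_aux f Finset.univ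

private lemma kelley_key (hμ : IsFAProb μ) (ε : ℝ) (m : ℕ) (f : Fin m → α)
    (hf : ∀ i, ε ≤ μ (f i)) :
    ∃ s : Finset (Fin m), ε * (m : ℝ) ≤ (s.card : ℝ) ∧ (s.Nonempty → s.inf f ≠ ⊥) := by
  classical
  have hsum1 : ∑ g : Fin m → Bool, μ (cell f g) = 1 := by
    rw [← famea_sum hμ.1 _ _ (fun x _ y _ hxy => cell_disjoint f hxy), sup_cell, hμ.2]
  have hfi : ∀ i, μ (f i) =
      ∑ g ∈ Finset.univ.filter (fun g : Fin m → Bool => g i = true), μ (cell f g) := by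
    intro i
    have hfeq : f i = (Finset.univ.filter (fun g : Fin m → Bool => g i = true)).sup (cell f) := by
      apply le_antisymm
      · have h0 : f i = Finset.univ.sup fun g : Fin m → Bool => f i ⊓ cell f g := by
          rw [← Finset.sup_inf_distrib_left, sup_cell, inf_top_eq]
        rw [h0]
        refine Finset.sup_le fun g _ => ?_
        by_cases hgi : g i = true
        · exact le_trans inf_le_right
            (Finset.le_sup (Finset.mem_filter.2 ⟨Finset.mem_univ _, hgi⟩))
        · have hc : cell f g ≤ (f i)ᶜ :=
            cell_le_compl f g (Bool.not_eq_true _ ▸ (by simpa using hgi))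
          calc f i ⊓ cell f g ≤ f i ⊓ (f i)ᶜ := inf_le_inf_left _ hc
            _ = ⊥ := inf_compl_eq_bot
            _ ≤ _ := bot_le
      · exact Finset.sup_le fun g hg => cell_le f g (Finset.mem_filter.1 hg).2
    rw [hfeq, famea_sum hμ.1 _ _ (fun x _ y _ hxy => cell_disjoint f hxy)]
  have hdouble : ∑ i, μ (f i) =
      ∑ g : Fin m → Bool, μ (cell f g) * ((Finset.univ.filter fun i => g i = true).card : ℝ) := by
    calc ∑ i, μ (f i)
        = ∑ i, ∑ g : Fin m → Bool, if g i = true then μ (cell f g) else 0 := by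
          simp_rw [hfi, Finset.sum_filter]
      _ = ∑ g : Fin m → Bool, ∑ i, if g i = true then μ (cell f g) else 0 := Finset.sum_comm
      _ = _ := by
          refine Finset.sum_congr rfl fun g _ => ?_
          rw [← Finset.sum_filter, Finset.sum_const, nsmul_eq_mul, mul_comm]
  have hT : (Finset.univ.filter fun g : Fin m → Bool => μ (cell f g) ≠ 0).Nonempty := by
    by_contra h
    rw [Finset.not_nonempty_iff_eq_empty, Finset.filter_eq_empty_iff] at h
    have h1 : (1 : ℝ) = 0 := by
      rw [← hsum1]
      exact Finset.sum_eq_zero fun g _ => not_not.1 (h (Finset.mem_univ g))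
    norm_num at h1
  obtain ⟨g₀, hg₀T, hg₀max⟩ := Finset.exists_max_image _
    (fun g : Fin m → Bool => (Finset.univ.filter fun i => g i = true).card) hT
  have hμg₀ : μ (cell f g₀) ≠ 0 := (Finset.mem_filter.1 hg₀T).2
  refine ⟨Finset.univ.filter fun i => g₀ i = true, ?_, fun _ => ?_⟩
  · have h1 : ε * (m : ℝ) ≤ ∑ i, μ (f i) := by
      have := Finset.card_nsmul_le_sum Finset.univ (fun i => μ (f i)) ε (fun i _ => hf i)
      simpa [Finset.card_univ, nsmul_eq_mul, mul_comm] using this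
    have h2 : ∑ i, μ (f i) ≤ ((Finset.univ.filter fun i => g₀ i = true).card : ℝ) := by
      rw [hdouble]
      calc ∑ g : Fin m → Bool, μ (cell f g) * ((Finset.univ.filter fun i => g i = true).card : ℝ)
          ≤ ∑ g : Fin m → Bool, μ (cell f g) *
              ((Finset.univ.filter fun i => g₀ i = true).card : ℝ) := by
            refine Finset.sum_le_sum fun g _ => ?_
            by_cases hg : μ (cell f g) = 0
            · simp [hg]
            · exact mul_le_mul_of_nonneg_left
                (Nat.cast_le.2 (hg₀max g (Finset.mem_filter.2 ⟨Finset.mem_univ _, hg⟩)))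
                (hμ.1.2.1 _)
        _ = _ := by rw [← Finset.sum_mul, hsum1, one_mul]
    exact h1.trans h2
  · intro hbot
    have hle : cell f g₀ ≤ (Finset.univ.filter fun i => g₀ i = true).inf f :=
      Finset.le_inf fun i hi => cell_le f g₀ (Finset.mem_filter.1 hi).2
    rw [hbot, le_bot_iff] at hle
    exact hμg₀ (by rw [hle]; exact hμ.1.1)

end KelleyAux

theorem stmt19 {α : Type*} [BooleanAlgebra α] (μ : α → ℝ)
    (hμ : IsFAProb μ) (hsp : StrictlyPositive μ) :
    (∀ a : α, a ≠ ⊥ → ∃ n : ℕ, a ∈ {b : α | ((1 : ℝ) / 2) ^ n ≤ μ b}) ∧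
    (∀ ε : ℝ, 0 < ε → ε ≤ 1 → ε ≤ interNum {a : α | ε ≤ μ a}) := by
  constructor
  · intro a ha
    obtain ⟨n, hn⟩ := exists_pow_lt_of_lt_one (hsp a ha) (by norm_num : (1 : ℝ) / 2 < 1)
    exact ⟨n, hn.le⟩
  · intro ε hε hε1
    refine le_csSup ⟨1, fun r hr => hr.2.1⟩ ?_
    exact ⟨hε.le, hε1, fun m f hf => kelley_key hμ ε m f fun i => hf i⟩
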